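/- arXiv:0706.0049 — 2 statements merged into one kernel-verified Lean document; each statement's English description precedes it below -/
import Mathlib

section
/- Let (Yⁿ) be a sequence of nonnegative càdlàg supermartingales that Fatou converges to a positive (i.e., nonnegative adapted càdlàg) process Y. Then Y is a supermartingale. If in addition Yⁿ₀ ≤ 1 for all n, then Y₀ ≤ 1. -/
open MeasureTheory Filter Set
open scoped NNReal ENNReal

variable {Ω : Type*}

/-- A real function is càdlàg on `[0,T]`: right-continuous at every `t ∈ [0,T)` and
with left limits at every `t ∈ (0,T]`. -/
def CadlagOn (T : ℝ) (f : ℝ → ℝ) : Prop :=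
  (∀ t ∈ Set.Ico (0 : ℝ) T, Filter.Tendsto f (nhdsWithin t (Set.Ioi t)) (nhds (f t))) ∧
  (∀ t ∈ Set.Ioc (0 : ℝ) T, ∃ L : ℝ, Filter.Tendsto f (nhdsWithin t (Set.Iio t)) (nhds L))

/-- A positive process on `[0,T]`: adapted, nonnegative, with càdlàg paths. -/
def PosProc {m0 : MeasurableSpace Ω} (μ : Measure Ω) (T : ℝ)
    (ℱ : Filtration ℝ m0) (X : ℝ → Ω → ℝ) : Prop :=
  (∀ t ∈ Set.Icc (0 : ℝ) T, StronglyMeasurable[ℱ t] (X t)) ∧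
  (∀ᵐ ω ∂μ, ∀ t ∈ Set.Icc (0 : ℝ) T, 0 ≤ X t ω) ∧
  (∀ᵐ ω ∂μ, CadlagOn T (fun t => X t ω))

/-- A nonnegative càdlàg supermartingale on `[0,T]`. -/
def SuperMG {m0 : MeasurableSpace Ω} (μ : Measure Ω) (T : ℝ)
    (ℱ : Filtration ℝ m0) (X : ℝ → Ω → ℝ) : Prop :=
  PosProc μ T ℱ X ∧ (∀ t ∈ Set.Icc (0 : ℝ) T, Integrable (X t) μ) ∧
  ∀ s t : ℝ, s ∈ Set.Icc (0 : ℝ) T → t ∈ Set.Icc (0 : ℝ) T → s ≤ t →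
    μ[X t | ℱ s] ≤ᵐ[μ] X s

/-- Membership in `S₁`: a nonnegative càdlàg supermartingale with `Y₀ ≤ 1`. -/
def S1mem {m0 : MeasurableSpace Ω} (μ : Measure Ω) (T : ℝ)
    (ℱ : Filtration ℝ m0) (X : ℝ → Ω → ℝ) : Prop :=
  SuperMG μ T ℱ X ∧ ∀ᵐ ω ∂μ, X 0 ω ≤ 1

/-- Membership in `V`: a nonincreasing positive process with `B₀ ≤ 1`. -/
def Vmem {m0 : MeasurableSpace Ω} (μ : Measure Ω) (T : ℝ)
    (ℱ : Filtration ℝ m0) (B : ℝ → Ω → ℝ) : Prop :=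
  PosProc μ T ℱ B ∧
  (∀ᵐ ω ∂μ, ∀ s ∈ Set.Icc (0 : ℝ) T, ∀ t ∈ Set.Icc (0 : ℝ) T, s ≤ t → B t ω ≤ B s ω) ∧
  (∀ᵐ ω ∂μ, B 0 ω ≤ 1)

/-- The process polar `C^×`: all positive processes `Y` such that `XY` is a
supermartingale with `X₀Y₀ ≤ 1` for every `X ∈ C`. -/
def procPolar {m0 : MeasurableSpace Ω} (μ : Measure Ω) (T : ℝ)
    (ℱ : Filtration ℝ m0) (C : Set (ℝ → Ω → ℝ)) : Set (ℝ → Ω → ℝ) :=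
  {Y | PosProc μ T ℱ Y ∧ ∀ X ∈ C,
    SuperMG μ T ℱ (fun t ω => X t ω * Y t ω) ∧ ∀ᵐ ω ∂μ, X 0 ω * Y 0 ω ≤ 1}

/-- (Process) solidity: stability under multiplication by elements of `V`. -/
def ProcSolid {m0 : MeasurableSpace Ω} (μ : Measure Ω) (T : ℝ)
    (ℱ : Filtration ℝ m0) (C : Set (ℝ → Ω → ℝ)) : Prop :=
  ∀ Y ∈ C, ∀ B : ℝ → Ω → ℝ, Vmem μ T ℱ B → (fun t ω => Y t ω * B t ω) ∈ C

/-- Fork-convexity (with the convention `0/0 = 0`, which holds for Lean division). -/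
def ForkConvex {m0 : MeasurableSpace Ω} (μ : Measure Ω) (T : ℝ)
    (ℱ : Filtration ℝ m0) (C : Set (ℝ → Ω → ℝ)) : Prop :=
  ∀ s ∈ Set.Icc (0 : ℝ) T, ∀ h : Ω → ℝ, StronglyMeasurable[ℱ s] h →
    (∀ ω, 0 ≤ h ω) → (∀ ω, h ω ≤ 1) →
    ∀ Y1 ∈ C, ∀ Y2 ∈ C, ∀ Y3 ∈ C,
      (fun t ω => if t < s then Y1 t ω
        else Y1 s ω * (h ω * (Y2 t ω / Y2 s ω) + (1 - h ω) * (Y3 t ω / Y3 s ω))) ∈ C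

/-- Fatou convergence of a sequence of positive processes. -/
def FatouConv {m0 : MeasurableSpace Ω} (μ : Measure Ω) (T : ℝ) (Yn : ℕ → ℝ → Ω → ℝ) (Y : ℝ → Ω → ℝ) : Prop :=
  ∃ T' : Set ℝ, T'.Countable ∧ T' ⊆ Set.Icc 0 T ∧ Set.Icc (0 : ℝ) T ⊆ closure T' ∧
    ∀ᵐ ω ∂μ,
      (∀ t ∈ Set.Ico (0 : ℝ) T,
        (ENNReal.ofReal (Y t ω)
            = Filter.liminf
                (fun s => Filter.liminf (fun n => ENNReal.ofReal (Yn n s ω)) Filter.atTop)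
                (nhdsWithin t (Set.Ioi t ∩ T')) ∧
         ENNReal.ofReal (Y t ω)
            = Filter.limsup
                (fun s => Filter.limsup (fun n => ENNReal.ofReal (Yn n s ω)) Filter.atTop)
                (nhdsWithin t (Set.Ioi t ∩ T')))) ∧
      Filter.Tendsto (fun n => Yn n T ω) Filter.atTop (nhds (Y T ω))

/-- Closedness under Fatou convergence. -/
def FatouClosed {m0 : MeasurableSpace Ω} (μ : Measure Ω) (T : ℝ)
    (ℱ : Filtration ℝ m0) (C : Set (ℝ → Ω → ℝ)) : Prop :=
  ∀ (Yn : ℕ → ℝ → Ω → ℝ) (Y : ℝ → Ω → ℝ), (∀ n, Yn n ∈ C) → PosProc μ T ℱ Y →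
    FatouConv μ T Yn Y → Y ∈ C

/-- A set of processes is far-reaching if it has an element with `Y_T > 0` a.s. -/
def FarReaching {m0 : MeasurableSpace Ω} (μ : Measure Ω) (T : ℝ) (C : Set (ℝ → Ω → ℝ)) : Prop :=
  ∃ Y ∈ C, ∀ᵐ ω ∂μ, 0 < Y T ω

/-- The solid, fork-convex hull of `C`: the smallest (process) solid and fork-convex
subset of `S₁` containing `C`. -/
def solidForkHull {m0 : MeasurableSpace Ω} (μ : Measure Ω) (T : ℝ)
    (ℱ : Filtration ℝ m0) (C : Set (ℝ → Ω → ℝ)) : Set (ℝ → Ω → ℝ) :=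
  ⋂₀ {D | D ⊆ {X | S1mem μ T ℱ X} ∧ ProcSolid μ T ℱ D ∧ ForkConvex μ T ℱ D ∧ C ⊆ D}

/-- Extended (`[0,∞]`-valued) conditional expectation of a (nonnegative) function,
defined as the supremum of the conditional expectations of its truncations. -/
noncomputable def econd {mΩ : MeasurableSpace Ω} (μ : Measure Ω)
    (m : MeasurableSpace Ω) (f : Ω → ℝ) : Ω → ℝ≥0∞ :=
  fun ω => ⨆ n : ℕ, ENNReal.ofReal ((μ[fun ω' => min (f ω') n | m]) ω)

section Helpers

variable {Ω : Type*}

/-- An `ℱ0`-strongly-measurable function is a.e. bounded by a natural number when every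
`ℱ0`-measurable set has probability `0` or `1`. -/
private lemma aux_exists_nat_bound {m0 : MeasurableSpace Ω} (μ : Measure Ω)
    [IsProbabilityMeasure μ] (𝒢 : MeasurableSpace Ω) (h𝒢 : 𝒢 ≤ m0)
    (htriv : ∀ A : Set Ω, MeasurableSet[𝒢] A → μ A = 0 ∨ μ A = 1)
    (f : Ω → ℝ) (hf : StronglyMeasurable[𝒢] f) :
    ∃ c : ℕ, ∀ᵐ ω ∂μ, f ω ≤ (c : ℝ) := by
  by_contra hc
  push_neg at hc
  have hms : ∀ c : ℕ, MeasurableSet[𝒢] (f ⁻¹' Set.Ioi (c : ℝ)) := fun c =>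
    hf.measurable measurableSet_Ioi
  have hA : ∀ c : ℕ, MeasurableSet[m0] (f ⁻¹' Set.Ioi (c : ℝ)) := fun c => h𝒢 _ (hms c)
  have hone : ∀ c : ℕ, μ (f ⁻¹' Set.Ioi (c : ℝ)) = 1 := by
    intro c
    rcases htriv _ (hms c) with h | h
    · exfalso
      refine hc c ?_
      rw [ae_iff]
      have he : {ω | ¬ f ω ≤ (c : ℝ)} = f ⁻¹' Set.Ioi (c : ℝ) := by
        ext ω; simp [not_le]
      convert h using 2
      ext ω; simp
    · exact h
  have hmem : ∀ᵐ ω ∂μ, ∀ c : ℕ, (c : ℝ) < f ω := by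
    rw [ae_all_iff]
    intro c
    rw [ae_iff]
    have he : {ω | ¬ (c : ℝ) < f ω} = (f ⁻¹' Set.Ioi (c : ℝ))ᶜ := by
      ext ω; simp [not_lt]
    rw [he, measure_compl (hA c) (measure_ne_top μ _), hone c]
    simp
  have hne : (MeasureTheory.ae μ).NeBot := MeasureTheory.ae_neBot.2
    (IsProbabilityMeasure.ne_zero μ)
  obtain ⟨ω, hω⟩ := hmem.exists
  obtain ⟨c, hcgt⟩ := exists_nat_gt (f ω)
  exact absurd (hω c) (not_lt.2 hcgt.le)

/-- The key one-step inequality: truncated set-integrals of `liminfₙ Yⁿ` decrease in time. -/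
private lemma aux_star {m0 : MeasurableSpace Ω} (μ : Measure Ω) [IsProbabilityMeasure μ]
    {T : ℝ} (ℱ : Filtration ℝ m0) (Yn : ℕ → ℝ → Ω → ℝ)
    (hYn : ∀ n, SuperMG μ T ℱ (Yn n))
    {a b : ℝ} (ha : a ∈ Set.Icc (0:ℝ) T) (hb : b ∈ Set.Icc (0:ℝ) T) (hab : a ≤ b)
    {A : Set Ω} (hA : MeasurableSet[ℱ a] A) (m : ℕ) :
    ∫ ω in A, (min (Filter.liminf (fun n => ENNReal.ofReal (Yn n b ω)) Filter.atTop)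
        (ENNReal.ofReal (m:ℝ))).toReal ∂μ
      ≤ ∫ ω in A, (min (Filter.liminf (fun n => ENNReal.ofReal (Yn n a ω)) Filter.atTop)
        (ENNReal.ofReal (m:ℝ))).toReal ∂μ := by
  haveI : SigmaFinite (μ.trim (ℱ.le a)) := by
    have := MeasureTheory.isFiniteMeasure_trim (μ := μ) (ℱ.le a)
    infer_instance
  set M : ℝ≥0∞ := ENNReal.ofReal (m:ℝ) with hMdef
  have hM : M ≠ ∞ := ENNReal.ofReal_ne_top
  have hMtoReal : M.toReal = (m:ℝ) := ENNReal.toReal_ofReal (Nat.cast_nonneg m)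
  have hmeasE : ∀ (i : ℕ) (r : ℝ), r ∈ Set.Icc (0:ℝ) T →
      Measurable (fun ω => ENNReal.ofReal (Yn i r ω)) := fun i r hr =>
    ENNReal.measurable_ofReal.comp (((hYn i).1.1 r hr).mono (ℱ.le r)).measurable
  set D : ℕ → Ω → ℝ≥0∞ := fun N ω => ⨅ i ≥ N, ENNReal.ofReal (Yn i b ω) with hDdef
  have hDmeas : ∀ N, Measurable (D N) := fun N =>
    Measurable.iInf fun i => Measurable.iInf fun _ => hmeasE i b hb
  have hDmono : ∀ ω, Monotone fun N => D N ω := fun ω N N' h =>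
    le_iInf₂ fun i hi => iInf₂_le i (h.trans hi)
  have hDsup : ∀ ω, (⨆ N, D N ω)
      = Filter.liminf (fun n => ENNReal.ofReal (Yn n b ω)) Filter.atTop := fun ω =>
    (Filter.liminf_eq_iSup_iInf_of_nat).symm
  set V : ℕ → Ω → ℝ := fun N ω => (min (D N ω) M).toReal with hVdef
  have hminM : ∀ (x : ℝ≥0∞), min x M ≠ ∞ := fun x => ne_top_of_le_ne_top hM (min_le_right _ _)
  have hVmeas : ∀ N, Measurable (V N) := fun N =>
    ENNReal.measurable_toReal.comp ((hDmeas N).min measurable_const)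
  have hVnonneg : ∀ N ω, 0 ≤ V N ω := fun N ω => ENNReal.toReal_nonneg
  have hVle : ∀ N ω, V N ω ≤ (m:ℝ) := fun N ω => by
    simpa [hMtoReal] using ENNReal.toReal_mono hM (min_le_right (D N ω) M)
  have hVint : ∀ N, Integrable (V N) μ := fun N =>
    Integrable.mono' (integrable_const (m:ℝ)) (hVmeas N).aestronglyMeasurable
      (Filter.Eventually.of_forall fun ω => by
        rw [Real.norm_eq_abs, abs_of_nonneg (hVnonneg N ω)]; exact hVle N ω)
  set La : Ω → ℝ≥0∞ := fun ω => Filter.liminf (fun n => ENNReal.ofReal (Yn n a ω)) Filter.atTop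
    with hLadef
  set Wa : Ω → ℝ := fun ω => (min (La ω) M).toReal with hWadef
  have hLameas : Measurable La := Measurable.liminf fun n => hmeasE n a ha
  have hWameas : Measurable Wa := ENNReal.measurable_toReal.comp (hLameas.min measurable_const)
  have hWanonneg : ∀ ω, 0 ≤ Wa ω := fun ω => ENNReal.toReal_nonneg
  have hWale : ∀ ω, Wa ω ≤ (m:ℝ) := fun ω => by
    simpa [hMtoReal] using ENNReal.toReal_mono hM (min_le_right (La ω) M)
  have hWaint : Integrable Wa μ :=
    Integrable.mono' (integrable_const (m:ℝ)) hWameas.aestronglyMeasurable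
      (Filter.Eventually.of_forall fun ω => by
        rw [Real.norm_eq_abs, abs_of_nonneg (hWanonneg ω)]; exact hWale ω)
  -- the core conditional-expectation bound
  have hcore : ∀ N, μ[V N | ℱ a] ≤ᵐ[μ] Wa := by
    intro N
    set g : ℕ → Ω → ℝ := fun i ω => min (max (Yn i b ω) 0) (m:ℝ) with hgdef
    have hgmeas : ∀ i, Measurable (g i) :=
      fun i => ((((hYn i).1.1 b hb).mono (ℱ.le b)).measurable.max measurable_const).min
        measurable_const
    have hgnonneg : ∀ i ω, 0 ≤ g i ω := fun i ω => le_min (le_max_right _ _) (Nat.cast_nonneg m)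
    have hgle : ∀ i ω, g i ω ≤ (m:ℝ) := fun i ω => min_le_right _ _
    have hgint : ∀ i, Integrable (g i) μ := fun i =>
      Integrable.mono' (integrable_const (m:ℝ)) (hgmeas i).aestronglyMeasurable
        (Filter.Eventually.of_forall fun ω => by
          rw [Real.norm_eq_abs, abs_of_nonneg (hgnonneg i ω)]; exact hgle i ω)
    have hVg : ∀ i, N ≤ i → ∀ ω, V N ω ≤ g i ω := by
      intro i hi ω
      have h1 : min (D N ω) M ≤ min (ENNReal.ofReal (Yn i b ω)) M :=
        min_le_min (iInf₂_le i hi) le_rfl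
      calc V N ω ≤ (min (ENNReal.ofReal (Yn i b ω)) M).toReal :=
            ENNReal.toReal_mono (hminM _) h1
        _ = g i ω := by
            rw [ENNReal.toReal_min ENNReal.ofReal_ne_top hM, ENNReal.toReal_ofReal', hMtoReal]
    have hsm1 : ∀ i, N ≤ i → μ[V N | ℱ a] ≤ᵐ[μ] Yn i a := by
      intro i hi
      have hgY : g i ≤ᵐ[μ] Yn i b := by
        filter_upwards [(hYn i).1.2.1] with ω hω
        have h0 : 0 ≤ Yn i b ω := hω b hb
        calc g i ω ≤ max (Yn i b ω) 0 := min_le_left _ _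
          _ = Yn i b ω := max_eq_left h0
      exact ((condExp_mono (hVint N) (hgint i)
          (Filter.Eventually.of_forall (hVg i hi))).trans
        (condExp_mono (hgint i) ((hYn i).2.1 b hb) hgY)).trans
        ((hYn i).2.2 a b ha hb hab)
    have hsm2 : μ[V N | ℱ a] ≤ᵐ[μ] fun _ => (m:ℝ) := by
      have h := condExp_mono (μ := μ) (m := ℱ a) (hVint N) (integrable_const (m:ℝ))
        (Filter.Eventually.of_forall fun ω => hVle N ω)
      rwa [condExp_const (ℱ.le a)] at h
    have hall : ∀ᵐ ω ∂μ, (∀ i, N ≤ i → (μ[V N | ℱ a]) ω ≤ Yn i a ω)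
        ∧ (μ[V N | ℱ a]) ω ≤ (m:ℝ) := by
      refine Filter.Eventually.and ?_ hsm2
      rw [ae_all_iff]
      intro i
      by_cases hi : N ≤ i
      · filter_upwards [hsm1 i hi] with ω hω _; exact hω
      · exact Filter.Eventually.of_forall fun ω h => absurd h hi
    filter_upwards [hall] with ω hω
    have h1 : ENNReal.ofReal ((μ[V N | ℱ a]) ω) ≤ ⨅ i ≥ N, ENNReal.ofReal (Yn i a ω) :=
      le_iInf₂ fun i hi => ENNReal.ofReal_le_ofReal (hω.1 i hi)
    have h2 : (⨅ i ≥ N, ENNReal.ofReal (Yn i a ω)) ≤ La ω := by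
      have he : La ω = ⨆ N, ⨅ i ≥ N, ENNReal.ofReal (Yn i a ω) :=
        Filter.liminf_eq_iSup_iInf_of_nat
      rw [he]
      exact le_iSup (fun N => ⨅ i ≥ N, ENNReal.ofReal (Yn i a ω)) N
    have h3 : ENNReal.ofReal ((μ[V N | ℱ a]) ω) ≤ min (La ω) M :=
      le_min (h1.trans h2) (by rw [hMdef]; exact ENNReal.ofReal_le_ofReal hω.2)
    calc (μ[V N | ℱ a]) ω ≤ max ((μ[V N | ℱ a]) ω) 0 := le_max_left _ _
      _ = (ENNReal.ofReal ((μ[V N | ℱ a]) ω)).toReal := ENNReal.toReal_ofReal'.symm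
      _ ≤ Wa ω := ENNReal.toReal_mono (hminM _) h3
  -- per-N set integral inequality
  have key : ∀ N, ∫ ω in A, V N ω ∂μ ≤ ∫ ω in A, Wa ω ∂μ := by
    intro N
    rw [← setIntegral_condExp (ℱ.le a) (hVint N) hA]
    exact setIntegral_mono_ae integrable_condExp.integrableOn hWaint.integrableOn (hcore N)
  -- limit as N → ∞
  have hVtend : ∀ ω, Filter.Tendsto (fun N => V N ω) Filter.atTop
      (nhds ((min (Filter.liminf (fun n => ENNReal.ofReal (Yn n b ω)) Filter.atTop) M).toReal)) := by
    intro ω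
    have h1 : Filter.Tendsto (fun N => D N ω) Filter.atTop (nhds (⨆ N, D N ω)) :=
      tendsto_atTop_iSup (hDmono ω)
    rw [hDsup ω] at h1
    have h2 := h1.min (tendsto_const_nhds (x := M))
    exact (ENNReal.tendsto_toReal (hminM _)).comp h2
  have hint_tend : Filter.Tendsto (fun N => ∫ ω in A, V N ω ∂μ) Filter.atTop
      (nhds (∫ ω in A, (min (Filter.liminf (fun n => ENNReal.ofReal (Yn n b ω)) Filter.atTop)
        M).toReal ∂μ)) := by
    refine tendsto_integral_of_dominated_convergence (fun _ => (m:ℝ))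
      (fun N => (hVmeas N).aestronglyMeasurable) (integrable_const _)
      (fun N => Filter.Eventually.of_forall fun ω => ?_)
      (Filter.Eventually.of_forall fun ω => hVtend ω)
    rw [Real.norm_eq_abs, abs_of_nonneg (hVnonneg N ω)]
    exact hVle N ω
  exact le_of_tendsto hint_tend (Filter.Eventually.of_forall key)

end Helpers

/-- A Fatou limit of nonnegative càdlàg supermartingales is a supermartingale;
if moreover each `Yⁿ₀ ≤ 1`, then `Y₀ ≤ 1`. -/
theorem fatou_limit_supermartingale {m0 : MeasurableSpace Ω} (μ : Measure Ω)
    [IsProbabilityMeasure μ] (T : ℝ) (hT : 0 < T) (ℱ : Filtration ℝ m0)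
    (hrc : ∀ t : ℝ, (ℱ t : MeasurableSpace Ω) = ⨅ (s : ℝ) (_ : t < s), ℱ s)
    (hcomp : ∀ A : Set Ω, μ A = 0 → MeasurableSet[ℱ 0] A)
    (htriv : ∀ A : Set Ω, MeasurableSet[ℱ 0] A → μ A = 0 ∨ μ A = 1)
    (Yn : ℕ → ℝ → Ω → ℝ) (Y : ℝ → Ω → ℝ)
    (hYn : ∀ n, SuperMG μ T ℱ (Yn n)) (hY : PosProc μ T ℱ Y)
    (hconv : FatouConv μ T Yn Y) :
    SuperMG μ T ℱ Y ∧
      ((∀ n, ∀ᵐ ω ∂μ, Yn n 0 ω ≤ 1) → ∀ᵐ ω ∂μ, Y 0 ω ≤ 1) := by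
    classical
  have h0mem : (0:ℝ) ∈ Set.Icc (0:ℝ) T := ⟨le_refl 0, hT.le⟩
  have hTmem : T ∈ Set.Icc (0:ℝ) T := ⟨hT.le, le_refl T⟩
  obtain ⟨T', hT'c, hT'sub, hT'cl, hae⟩ := hconv
  set L : ℝ → Ω → ℝ≥0∞ :=
    fun r ω => Filter.liminf (fun n => ENNReal.ofReal (Yn n r ω)) Filter.atTop with hLdef
  set W : ℝ → ℕ → Ω → ℝ :=
    fun r m ω => (min (L r ω) (ENNReal.ofReal (m:ℝ))).toReal with hWdef
  have hYnn : ∀ᵐ ω ∂μ, ∀ t ∈ Set.Icc (0:ℝ) T, 0 ≤ Y t ω := hY.2.1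
  have hLmeas : ∀ r ∈ Set.Icc (0:ℝ) T, Measurable (L r) := by
    intro r hr
    simp only [hLdef]
    exact Measurable.liminf fun n =>
      ENNReal.measurable_ofReal.comp (((hYn n).1.1 r hr).mono (ℱ.le r)).measurable
  have hWmeas : ∀ r ∈ Set.Icc (0:ℝ) T, ∀ m : ℕ, Measurable (W r m) := by
    intro r hr m
    exact ENNReal.measurable_toReal.comp ((hLmeas r hr).min measurable_const)
  have hWnonneg : ∀ r (m : ℕ) ω, 0 ≤ W r m ω := fun _ _ _ => ENNReal.toReal_nonneg
  have hWtop : ∀ r (m : ℕ) ω, min (L r ω) (ENNReal.ofReal (m:ℝ)) ≠ ∞ := fun r m ω =>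
    ne_top_of_le_ne_top ENNReal.ofReal_ne_top (min_le_right _ _)
  have hWle : ∀ r (m : ℕ) ω, W r m ω ≤ (m:ℝ) := by
    intro r m ω
    simp only [hWdef]
    calc (min (L r ω) (ENNReal.ofReal (m:ℝ))).toReal
        ≤ (ENNReal.ofReal (m:ℝ)).toReal :=
          ENNReal.toReal_mono ENNReal.ofReal_ne_top (min_le_right _ _)
      _ = (m:ℝ) := ENNReal.toReal_ofReal (Nat.cast_nonneg m)
  have star : ∀ a b : ℝ, a ∈ Set.Icc (0:ℝ) T → b ∈ Set.Icc (0:ℝ) T → a ≤ b →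
      ∀ A : Set Ω, MeasurableSet[ℱ a] A → ∀ m : ℕ,
      ∫ ω in A, W b m ω ∂μ ≤ ∫ ω in A, W a m ω ∂μ := by
    intro a b ha hb hab A hA m
    simp only [hWdef, hLdef]
    exact aux_star μ ℱ Yn hYn ha hb hab hA m
  -- the approaching filters are nontrivial
  have hne : ∀ u, u ∈ Set.Ico (0:ℝ) T → (nhdsWithin u (Set.Ioi u ∩ T')).NeBot := by
    intro u hu
    rw [← mem_closure_iff_nhdsWithin_neBot]
    rw [Metric.mem_closure_iff]
    intro ε hε
    set δ := min ε (T - u) with hδdef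
    have hδ : 0 < δ := lt_min hε (sub_pos.2 hu.2)
    have hδε : δ ≤ ε := min_le_left _ _
    have hδT : δ ≤ T - u := min_le_right _ _
    have hvIcc : u + δ/2 ∈ Set.Icc (0:ℝ) T := ⟨by linarith [hu.1], by linarith⟩
    have hvc := hT'cl hvIcc
    rw [Metric.mem_closure_iff] at hvc
    obtain ⟨w, hw, hwd⟩ := hvc (δ/2) (by linarith)
    rw [Real.dist_eq, abs_lt] at hwd
    refine ⟨w, ⟨Set.mem_Ioi.2 (by linarith [hwd.2]), hw⟩, ?_⟩
    rw [Real.dist_eq, abs_lt]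
    constructor <;> linarith [hwd.1, hwd.2]
  -- a.e. right-limits of the liminf process
  have hconv_ae : ∀ᵐ ω ∂μ,
      (∀ u ∈ Set.Ico (0:ℝ) T, Filter.Tendsto (fun s' => L s' ω)
        (nhdsWithin u (Set.Ioi u ∩ T')) (nhds (ENNReal.ofReal (Y u ω)))) ∧
      Filter.Tendsto (fun n => Yn n T ω) Filter.atTop (nhds (Y T ω)) := by
    filter_upwards [hae] with ω hω
    refine ⟨?_, hω.2⟩
    intro u hu
    haveI := hne u hu
    obtain ⟨hlinf, hlsup⟩ := hω.1 u hu
    have hmono : ∀ s' : ℝ, Filter.liminf (fun n => ENNReal.ofReal (Yn n s' ω)) Filter.atTop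
        ≤ Filter.limsup (fun n => ENNReal.ofReal (Yn n s' ω)) Filter.atTop := fun s' =>
      Filter.liminf_le_limsup
    have hsup_le : Filter.limsup (fun s' => L s' ω) (nhdsWithin u (Set.Ioi u ∩ T'))
        ≤ ENNReal.ofReal (Y u ω) := by
      rw [hlsup]
      exact Filter.limsup_le_limsup (Filter.Eventually.of_forall hmono)
    have hle_inf : ENNReal.ofReal (Y u ω)
        ≤ Filter.liminf (fun s' => L s' ω) (nhdsWithin u (Set.Ioi u ∩ T')) := le_of_eq hlinf
    exact tendsto_of_le_liminf_of_limsup_le hle_inf hsup_le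
  -- sequences approaching from the right inside T'
  have hseq : ∀ u ∈ Set.Ico (0:ℝ) T, ∃ x : ℕ → ℝ, (∀ j, x j ∈ Set.Ioi u ∩ T') ∧
      Filter.Tendsto x Filter.atTop (nhdsWithin u (Set.Ioi u ∩ T')) := by
    intro u hu
    haveI := hne u hu
    obtain ⟨x0, hx0⟩ := Filter.exists_seq_tendsto (nhdsWithin u (Set.Ioi u ∩ T'))
    have hev : ∀ᶠ j in Filter.atTop, x0 j ∈ Set.Ioi u ∩ T' := hx0 self_mem_nhdsWithin
    obtain ⟨J, hJ⟩ := Filter.eventually_atTop.1 hev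
    exact ⟨fun j => x0 (j + J), fun j => hJ _ (Nat.le_add_left J j),
      hx0.comp (Filter.tendsto_add_atTop_nat J)⟩
  -- convergence of truncated integrals along such sequences
  have hWlim : ∀ u, u ∈ Set.Ico (0:ℝ) T → ∀ x : ℕ → ℝ, (∀ j, x j ∈ Set.Ioi u ∩ T') →
      Filter.Tendsto x Filter.atTop (nhdsWithin u (Set.Ioi u ∩ T')) → ∀ m : ℕ, ∀ A : Set Ω,
      Filter.Tendsto (fun j => ∫ ω in A, W (x j) m ω ∂μ) Filter.atTop
        (nhds (∫ ω in A, min (Y u ω) (m:ℝ) ∂μ)) := by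
    intro u hu x hx1 hx2 m A
    have huI : u ∈ Set.Icc (0:ℝ) T := ⟨hu.1, hu.2.le⟩
    have hxI : ∀ j, x j ∈ Set.Icc (0:ℝ) T := fun j => hT'sub (hx1 j).2
    have hptwise : ∀ᵐ ω ∂μ, Filter.Tendsto (fun j => W (x j) m ω) Filter.atTop
        (nhds (min (Y u ω) (m:ℝ))) := by
      filter_upwards [hconv_ae, hYnn] with ω hω hωnn
      have h1 : Filter.Tendsto (fun j => L (x j) ω) Filter.atTop
          (nhds (ENNReal.ofReal (Y u ω))) := (hω.1 u hu).comp hx2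
      have h2 := h1.min (tendsto_const_nhds (x := ENNReal.ofReal (m:ℝ)))
      have h4 : (min (ENNReal.ofReal (Y u ω)) (ENNReal.ofReal (m:ℝ))).toReal
          = min (Y u ω) (m:ℝ) := by
        rw [ENNReal.toReal_min ENNReal.ofReal_ne_top ENNReal.ofReal_ne_top,
          ENNReal.toReal_ofReal (hωnn u huI), ENNReal.toReal_ofReal (Nat.cast_nonneg m)]
      rw [← h4]
      exact (ENNReal.tendsto_toReal
        (ne_top_of_le_ne_top ENNReal.ofReal_ne_top (min_le_right _ _))).comp h2
    refine tendsto_integral_of_dominated_convergence (fun _ => (m:ℝ))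
      (fun j => ((hWmeas (x j) (hxI j) m).aestronglyMeasurable).restrict)
      (integrable_const _)
      (fun j => Filter.Eventually.of_forall fun ω => ?_)
      (ae_restrict_of_ae hptwise)
    rw [Real.norm_eq_abs, abs_of_nonneg (hWnonneg _ _ ω)]
    exact hWle _ m ω
  -- the main truncated set-integral inequality
  have main : ∀ s t : ℝ, s ∈ Set.Icc (0:ℝ) T → t ∈ Set.Icc (0:ℝ) T → s < t →
      ∀ A : Set Ω, MeasurableSet[ℱ s] A → ∀ m : ℕ,
      ∫ ω in A, min (Y t ω) (m:ℝ) ∂μ ≤ ∫ ω in A, min (Y s ω) (m:ℝ) ∂μ := by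
    intro s t hs ht hst A hA m
    have hsIco : s ∈ Set.Ico (0:ℝ) T := ⟨hs.1, lt_of_lt_of_le hst ht.2⟩
    obtain ⟨x, hx1, hx2⟩ := hseq s hsIco
    have hxlim := hWlim s hsIco x hx1 hx2 m A
    have hxs : Filter.Tendsto x Filter.atTop (nhds s) := hx2.mono_right nhdsWithin_le_nhds
    have hkey : ∀ᶠ k in Filter.atTop,
        ∫ ω in A, min (Y t ω) (m:ℝ) ∂μ ≤ ∫ ω in A, W (x k) m ω ∂μ := by
      filter_upwards [hxs.eventually_lt_const hst] with k hk
      have hxkI : x k ∈ Set.Icc (0:ℝ) T := hT'sub (hx1 k).2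
      have hAk : MeasurableSet[ℱ (x k)] A := ℱ.mono (le_of_lt (hx1 k).1) _ hA
      by_cases htT : t = T
      · rw [htT] at hk ⊢
        have hWT : ∫ ω in A, min (Y T ω) (m:ℝ) ∂μ = ∫ ω in A, W T m ω ∂μ := by
          refine integral_congr_ae (ae_restrict_of_ae ?_)
          filter_upwards [hconv_ae, hYnn] with ω hω hωnn
          have hLT : L T ω = ENNReal.ofReal (Y T ω) :=
            ((ENNReal.continuous_ofReal.tendsto _).comp hω.2).liminf_eq
          show min (Y T ω) (m:ℝ) = (min (L T ω) (ENNReal.ofReal (m:ℝ))).toReal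
          rw [hLT, ENNReal.toReal_min ENNReal.ofReal_ne_top ENNReal.ofReal_ne_top,
            ENNReal.toReal_ofReal (hωnn T hTmem), ENNReal.toReal_ofReal (Nat.cast_nonneg m)]
        rw [hWT]
        exact star (x k) T hxkI hTmem hxkI.2 A hAk m
      · have htIco : t ∈ Set.Ico (0:ℝ) T := ⟨ht.1, lt_of_le_of_ne ht.2 htT⟩
        obtain ⟨y, hy1, hy2⟩ := hseq t htIco
        have hylim := hWlim t htIco y hy1 hy2 m A
        refine le_of_tendsto hylim (Filter.Eventually.of_forall fun j => ?_)
        exact star (x k) (y j) hxkI (hT'sub (hy1 j).2) (hk.le.trans (hy1 j).1.le) A hAk m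
    exact ge_of_tendsto hxlim hkey
  -- a.e. bound on Y 0
  obtain ⟨c0, hc0⟩ := aux_exists_nat_bound μ (ℱ 0) (ℱ.le 0) htriv (Y 0) (hY.1 0 h0mem)
  -- integrability of truncations
  have hminint : ∀ r ∈ Set.Icc (0:ℝ) T, ∀ c : ℝ, 0 ≤ c →
      Integrable (fun ω => min (Y r ω) c) μ := by
    intro r hr c hcpos
    refine Integrable.mono' (integrable_const c)
      ((((hY.1 r hr).mono (ℱ.le r)).measurable.min measurable_const).aestronglyMeasurable) ?_
    filter_upwards [hYnn] with ω hω
    rw [Real.norm_eq_abs, abs_of_nonneg (le_min (hω r hr) hcpos)]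
    exact min_le_right _ _
  have hint0 : ∀ m : ℕ, ∫ ω, min (Y 0 ω) (m:ℝ) ∂μ ≤ (c0:ℝ) := by
    intro m
    have h1 : ∫ ω, min (Y 0 ω) (m:ℝ) ∂μ ≤ ∫ _ω, (c0:ℝ) ∂μ := by
      refine integral_mono_ae (hminint 0 h0mem _ (Nat.cast_nonneg m)) (integrable_const _) ?_
      filter_upwards [hc0] with ω hω
      exact le_trans (min_le_left _ _) hω
    simpa using h1
  -- integrability of Y
  have hYint : ∀ t ∈ Set.Icc (0:ℝ) T, Integrable (Y t) μ := by
    intro t ht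
    have hmeasYt : AEStronglyMeasurable (Y t) μ :=
      ((hY.1 t ht).mono (ℱ.le t)).aestronglyMeasurable
    have hYtnn : 0 ≤ᵐ[μ] Y t := by filter_upwards [hYnn] with ω hω; exact hω t ht
    have hbd : ∀ m : ℕ, ∫ ω, min (Y t ω) (m:ℝ) ∂μ ≤ (c0:ℝ) := by
      intro m
      rcases eq_or_lt_of_le ht.1 with h0t | h0t
      · rw [← h0t]
        exact hint0 m
      · have h2 := main 0 t h0mem ht h0t Set.univ MeasurableSet.univ m
        rw [setIntegral_univ, setIntegral_univ] at h2
        exact h2.trans (hint0 m)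
    refine ⟨hmeasYt, ?_⟩
    rw [hasFiniteIntegral_iff_ofReal hYtnn]
    have hmeasE : Measurable fun ω => ENNReal.ofReal (Y t ω) :=
      ENNReal.measurable_ofReal.comp ((hY.1 t ht).mono (ℱ.le t)).measurable
    have hkey : ∀ m : ℕ,
        ∫⁻ ω, min (ENNReal.ofReal (Y t ω)) (ENNReal.ofReal (m:ℝ)) ∂μ ≤ ENNReal.ofReal (c0:ℝ) := by
      intro m
      have he : ∀ ω, min (ENNReal.ofReal (Y t ω)) (ENNReal.ofReal (m:ℝ))
          = ENNReal.ofReal (min (Y t ω) (m:ℝ)) := fun ω =>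
        (Monotone.map_min (fun _ _ h => ENNReal.ofReal_le_ofReal h)).symm
      have hnn : 0 ≤ᵐ[μ] fun ω => min (Y t ω) (m:ℝ) := by
        filter_upwards [hYtnn] with ω hω
        exact le_min hω (Nat.cast_nonneg m)
      calc ∫⁻ ω, min (ENNReal.ofReal (Y t ω)) (ENNReal.ofReal (m:ℝ)) ∂μ
          = ∫⁻ ω, ENNReal.ofReal (min (Y t ω) (m:ℝ)) ∂μ := lintegral_congr he
        _ = ENNReal.ofReal (∫ ω, min (Y t ω) (m:ℝ) ∂μ) :=
            (ofReal_integral_eq_lintegral_ofReal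
              (hminint t ht _ (Nat.cast_nonneg m)) hnn).symm
        _ ≤ ENNReal.ofReal (c0:ℝ) := ENNReal.ofReal_le_ofReal (hbd m)
    have hsup : ∫⁻ ω, ENNReal.ofReal (Y t ω) ∂μ
        = ⨆ m : ℕ, ∫⁻ ω, min (ENNReal.ofReal (Y t ω)) (ENNReal.ofReal (m:ℝ)) ∂μ := by
      rw [← lintegral_iSup (fun m => hmeasE.min measurable_const) ?_]
      · refine lintegral_congr fun ω => ?_
        apply le_antisymm
        · obtain ⟨m, hm⟩ := exists_nat_ge (Y t ω)
          refine le_iSup_of_le m ?_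
          rw [min_eq_left (ENNReal.ofReal_le_ofReal hm)]
        · exact iSup_le fun m => min_le_left _ _
      · intro m m' h ω
        exact min_le_min le_rfl (ENNReal.ofReal_le_ofReal (by exact_mod_cast h))
    rw [hsup]
    exact lt_of_le_of_lt (iSup_le hkey) ENNReal.ofReal_lt_top
  -- the supermartingale property
  have hsuper : ∀ s t : ℝ, s ∈ Set.Icc (0:ℝ) T → t ∈ Set.Icc (0:ℝ) T → s ≤ t →
      μ[Y t | ℱ s] ≤ᵐ[μ] Y s := by
    intro s t hs ht hst
    haveI : SigmaFinite (μ.trim (ℱ.le s)) := by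
      have := MeasureTheory.isFiniteMeasure_trim (μ := μ) (ℱ.le s)
      infer_instance
    rcases eq_or_lt_of_le hst with h | hlt
    · subst h
      rw [condExp_of_stronglyMeasurable (ℱ.le s) (hY.1 s hs) (hYint s hs)]
    · have hintt := hYint t ht
      have hints := hYint s hs
      have hset : ∀ A : Set Ω, MeasurableSet[ℱ s] A →
          ∫ ω in A, Y t ω ∂μ ≤ ∫ ω in A, Y s ω ∂μ := by
        intro A hA
        have htd : ∀ r, r ∈ Set.Icc (0:ℝ) T →
            Filter.Tendsto (fun m : ℕ => ∫ ω in A, min (Y r ω) (m:ℝ) ∂μ) Filter.atTop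
              (nhds (∫ ω in A, Y r ω ∂μ)) := by
          intro r hr
          refine tendsto_integral_of_dominated_convergence (fun ω => Y r ω)
            (fun m => ((hminint r hr _ (Nat.cast_nonneg m)).aestronglyMeasurable).restrict)
            (hYint r hr).restrict
            (fun m => ae_restrict_of_ae ?_) (ae_restrict_of_ae ?_)
          · filter_upwards [hYnn] with ω hω
            rw [Real.norm_eq_abs, abs_of_nonneg (le_min (hω r hr) (Nat.cast_nonneg m))]
            exact min_le_left _ _
          · refine Filter.Eventually.of_forall fun ω => ?_
            obtain ⟨M0, hM0⟩ := exists_nat_ge (Y r ω)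
            refine tendsto_atTop_of_eventually_const (i₀ := M0) fun m hm => ?_
            exact min_eq_left (hM0.trans (by exact_mod_cast hm))
        exact le_of_tendsto_of_tendsto' (htd t ht) (htd s hs)
          (fun m => main s t hs ht hlt A hA m)
      have hf_meas : StronglyMeasurable[ℱ s] (μ[Y t | ℱ s]) := stronglyMeasurable_condExp
      have hsub_meas : StronglyMeasurable[ℱ s] (fun ω => Y s ω - (μ[Y t | ℱ s]) ω) :=
        (hY.1 s hs).sub hf_meas
      have hsub_int : Integrable (fun ω => Y s ω - (μ[Y t | ℱ s]) ω) μ :=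
        hints.sub integrable_condExp
      have h0 : (0 : Ω → ℝ) ≤ᵐ[μ.trim (ℱ.le s)] fun ω => Y s ω - (μ[Y t | ℱ s]) ω := by
        refine ae_nonneg_of_forall_setIntegral_nonneg
          (hsub_int.trim (ℱ.le s) hsub_meas) ?_
        intro A hA _
        rw [← setIntegral_trim (ℱ.le s) hsub_meas hA]
        have hsplit : ∫ ω in A, (Y s ω - (μ[Y t | ℱ s]) ω) ∂μ
            = ∫ ω in A, Y s ω ∂μ - ∫ ω in A, (μ[Y t | ℱ s]) ω ∂μ :=
          integral_sub hints.integrableOn integrable_condExp.integrableOn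
        have hcx : ∫ ω in A, (μ[Y t | ℱ s]) ω ∂μ = ∫ ω in A, Y t ω ∂μ :=
          setIntegral_condExp (ℱ.le s) hintt hA
        rw [hsplit, hcx]
        linarith [hset A hA]
      have h1 := ae_le_of_ae_le_trim h0
      filter_upwards [h1] with ω hω
      have h2 : (0:ℝ) ≤ Y s ω - (μ[Y t | ℱ s]) ω := hω
      linarith
  refine ⟨⟨hY, hYint, hsuper⟩, ?_⟩
  -- Part 2 : Y 0 ≤ 1 a.s.
  intro h1n
  haveI : SigmaFinite (μ.trim (ℱ.le 0)) := by
    have := MeasureTheory.isFiniteMeasure_trim (μ := μ) (ℱ.le 0)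
    infer_instance
  have hippo : ∀ n : ℕ, ∀ r ∈ Set.Icc (0:ℝ) T, ∫ ω, Yn n r ω ∂μ ≤ 1 := by
    intro n r hr
    have hc := (hYn n).2.2 0 r h0mem hr hr.1
    calc ∫ ω, Yn n r ω ∂μ = ∫ ω, (μ[Yn n r | ℱ 0]) ω ∂μ :=
          (integral_condExp (ℱ.le 0)).symm
      _ ≤ ∫ ω, Yn n 0 ω ∂μ := integral_mono_ae integrable_condExp ((hYn n).2.1 0 h0mem) hc
      _ ≤ ∫ _ω, (1:ℝ) ∂μ := integral_mono_ae ((hYn n).2.1 0 h0mem) (integrable_const 1) (h1n n)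
      _ = 1 := by simp
  have hWb : ∀ r ∈ Set.Icc (0:ℝ) T, ∀ m : ℕ, ∫ ω, W r m ω ∂μ ≤ 1 := by
    intro r hr m
    have h2 : ∫⁻ ω, min (L r ω) (ENNReal.ofReal (m:ℝ)) ∂μ ≤ ENNReal.ofReal 1 := by
      calc ∫⁻ ω, min (L r ω) (ENNReal.ofReal (m:ℝ)) ∂μ
          ≤ ∫⁻ ω, L r ω ∂μ := lintegral_mono fun ω => min_le_left _ _
        _ ≤ Filter.liminf (fun n => ∫⁻ ω, ENNReal.ofReal (Yn n r ω) ∂μ) Filter.atTop := by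
            simp only [hLdef]
            exact lintegral_liminf_le fun n =>
              ENNReal.measurable_ofReal.comp (((hYn n).1.1 r hr).mono (ℱ.le r)).measurable
        _ ≤ ENNReal.ofReal 1 := by
            have hle : ∀ n, ∫⁻ ω, ENNReal.ofReal (Yn n r ω) ∂μ ≤ ENNReal.ofReal 1 := by
              intro n
              have hnn : 0 ≤ᵐ[μ] Yn n r := by
                filter_upwards [(hYn n).1.2.1] with ω hω
                exact hω r hr
              rw [← ofReal_integral_eq_lintegral_ofReal ((hYn n).2.1 r hr) hnn]
              exact ENNReal.ofReal_le_ofReal (hippo n r hr)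
            calc Filter.liminf (fun n => ∫⁻ ω, ENNReal.ofReal (Yn n r ω) ∂μ) Filter.atTop
                ≤ Filter.liminf (fun _ : ℕ => ENNReal.ofReal 1) Filter.atTop :=
                  Filter.liminf_le_liminf (Filter.Eventually.of_forall hle)
              _ = ENNReal.ofReal 1 := Filter.liminf_const _
    have h3 : ∫ ω, W r m ω ∂μ
        = (∫⁻ ω, min (L r ω) (ENNReal.ofReal (m:ℝ)) ∂μ).toReal := by
      rw [integral_eq_lintegral_of_nonneg_ae
        (Filter.Eventually.of_forall fun ω => hWnonneg r m ω)
        ((hWmeas r hr m).aestronglyMeasurable)]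
      congr 1
      refine lintegral_congr fun ω => ?_
      exact ENNReal.ofReal_toReal (hWtop r m ω)
    rw [h3]
    calc (∫⁻ ω, min (L r ω) (ENNReal.ofReal (m:ℝ)) ∂μ).toReal
        ≤ (ENNReal.ofReal 1).toReal := ENNReal.toReal_mono ENNReal.ofReal_ne_top h2
      _ = 1 := by rw [ENNReal.toReal_ofReal zero_le_one]
  have h0Ico : (0:ℝ) ∈ Set.Ico (0:ℝ) T := ⟨le_refl 0, hT⟩
  obtain ⟨x, hx1, hx2⟩ := hseq 0 h0Ico
  have hE0 : ∀ m : ℕ, ∫ ω, min (Y 0 ω) (m:ℝ) ∂μ ≤ 1 := by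
    intro m
    have hxlim := hWlim 0 h0Ico x hx1 hx2 m Set.univ
    simp only [setIntegral_univ] at hxlim
    refine le_of_tendsto hxlim ?_
    exact Filter.Eventually.of_forall fun k => hWb (x k) (hT'sub (hx1 k).2) m
  have hmeasY0 : Measurable[ℱ 0] (Y 0) := (hY.1 0 h0mem).measurable
  have hAk : ∀ k : ℕ, μ (Y 0 ⁻¹' Set.Ici (1 + 1/((k:ℝ)+1))) = 0 := by
    intro k
    have hms : MeasurableSet[ℱ 0] (Y 0 ⁻¹' Set.Ici (1 + 1/((k:ℝ)+1))) :=
      hmeasY0 measurableSet_Ici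
    rcases htriv _ hms with h | h
    · exact h
    · exfalso
      have hone : ∀ᵐ ω ∂μ, ω ∈ Y 0 ⁻¹' Set.Ici (1 + 1/((k:ℝ)+1)) := by
        have hcompl := measure_compl (ℱ.le 0 _ hms) (measure_ne_top μ _)
        rw [h, measure_univ] at hcompl
        rw [ae_iff]
        show μ (Y 0 ⁻¹' Set.Ici (1 + 1/((k:ℝ)+1)))ᶜ = 0
        rw [hcompl]
        simp
      have hk2 : (1:ℝ) + 1/((k:ℝ)+1) ≤ 2 := by
        have hle1 : 1/((k:ℝ)+1) ≤ 1 := by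
          rw [div_le_one (by positivity)]
          have hk0 : (0:ℝ) ≤ (k:ℝ) := Nat.cast_nonneg k
          linarith
        linarith
      have hge : (1:ℝ) + 1/((k:ℝ)+1) ≤ ∫ ω, min (Y 0 ω) (2:ℝ) ∂μ := by
        have h4 : ∫ _ω, (1 + 1/((k:ℝ)+1)) ∂μ ≤ ∫ ω, min (Y 0 ω) (2:ℝ) ∂μ := by
          refine integral_mono_ae (integrable_const _)
            (hminint 0 h0mem _ (by norm_num)) ?_
          filter_upwards [hone] with ω hω
          exact le_min hω hk2
        simpa using h4
      have h5 : ∫ ω, min (Y 0 ω) (2:ℝ) ∂μ ≤ 1 := by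
        have h5' := hE0 2
        norm_num at h5'
        exact h5'
      have h6 : 0 < 1/((k:ℝ)+1) := by positivity
      linarith
  rw [ae_iff]
  refine measure_mono_null ?_ (measure_iUnion_null fun k => hAk k)
  intro ω hω
  simp only [Set.mem_setOf_eq, not_le] at hω
  obtain ⟨k, hk⟩ := exists_nat_one_div_lt (sub_pos.2 hω)
  refine Set.mem_iUnion.2 ⟨k, ?_⟩
  simp only [Set.mem_preimage, Set.mem_Ici]
  linarith
end

section
/- If (Yⁿ) is a sequence in S₁ that Fatou converges to Y ∈ S₁, then there is a countable set K ⊆ [0,T) such that for every t ∈ [0,T] \ K one has Y_t = liminf_n Yⁿ_t a.s. -/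
open MeasureTheory Filter Set
open scoped NNReal ENNReal

variable {Ω : Type*}

private lemma liminf_min_const (f : ℕ → ℝ≥0∞) (c : ℝ≥0∞) :
    Filter.liminf (fun n => min (f n) c) Filter.atTop
      = min (Filter.liminf f Filter.atTop) c := by
  have hmono : Monotone (fun x : ℝ≥0∞ => min x c) :=
    fun a b hab => min_le_min hab le_rfl
  have hcont : ContinuousAt (fun x : ℝ≥0∞ => min x c) (Filter.liminf f Filter.atTop) :=
    (continuous_id.min continuous_const).continuousAt
  simpa [Function.comp_def] using (hmono.map_liminf_of_continuousAt f hcont).symm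

private lemma exists_approx_seq {T : ℝ} {T' : Set ℝ}
    (hdense : Set.Icc (0:ℝ) T ⊆ closure T') {t : ℝ} (ht : t ∈ Set.Ico (0:ℝ) T) :
    ∃ s : ℕ → ℝ, (∀ k, s k ∈ T' ∧ t < s k ∧ s k ≤ T) ∧
      Filter.Tendsto s Filter.atTop (nhdsWithin t (Set.Ioi t ∩ T')) := by
  have key : ∀ ε : ℝ, 0 < ε → ∃ x, x ∈ T' ∧ t < x ∧ x < t + ε ∧ x ≤ T := by
    intro ε hε
    set δ := min ε (T - t) with hδdef
    have hδ : 0 < δ := lt_min hε (by linarith [ht.2])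
    have hδε : δ ≤ ε := min_le_left _ _
    have hδT : δ ≤ T - t := min_le_right _ _
    have hp : t + δ/2 ∈ Set.Icc (0:ℝ) T := ⟨by linarith [ht.1], by linarith⟩
    obtain ⟨x, hxT', hxd⟩ := Metric.mem_closure_iff.1 (hdense hp) (δ/4) (by linarith)
    rw [Real.dist_eq, abs_lt] at hxd
    refine ⟨x, hxT', by linarith, by linarith, by linarith⟩
  choose s hsT' hst hslt hsle using fun k : ℕ => key (1/((k:ℝ)+1)) (by positivity)
  refine ⟨s, fun k => ⟨hsT' k, hst k, hsle k⟩, ?_⟩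
  apply tendsto_nhdsWithin_of_tendsto_nhds_of_eventually_within
  · have h0 : Filter.Tendsto (fun k : ℕ => t + 1/((k:ℝ)+1)) Filter.atTop (nhds (t + 0)) :=
      tendsto_const_nhds.add tendsto_one_div_add_atTop_nhds_zero_nat
    rw [add_zero] at h0
    exact tendsto_of_tendsto_of_tendsto_of_le_of_le tendsto_const_nhds h0
      (fun k => (hst k).le) (fun k => (hslt k).le)
  · exact Filter.Eventually.of_forall fun k => ⟨hst k, hsT' k⟩
private noncomputable def Zl (Yn : ℕ → ℝ → Ω → ℝ) (r : ℝ) (ω : Ω) : ℝ≥0∞ :=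
  Filter.liminf (fun n => ENNReal.ofReal (Yn n r ω)) Filter.atTop

/-- Truncated set-integral supermartingale property for the liminf process. -/
private lemma superMG_truncated {m0 : MeasurableSpace Ω} (μ : Measure Ω)
    [IsProbabilityMeasure μ] {T : ℝ} (ℱ : Filtration ℝ m0) {Yn : ℕ → ℝ → Ω → ℝ}
    (hYn : ∀ n, S1mem μ T ℱ (Yn n)) (M : ℕ) {s u : ℝ}
    (hs : s ∈ Set.Icc (0:ℝ) T) (hu : u ∈ Set.Icc (0:ℝ) T) (hsu : s ≤ u)
    {A : Set Ω} (hA : MeasurableSet[ℱ s] A) :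
    ∫⁻ ω in A, min (Zl Yn u ω) (M:ℝ≥0∞) ∂μ ≤ ∫⁻ ω in A, min (Zl Yn s ω) (M:ℝ≥0∞) ∂μ := by
  classical
  haveI : SigmaFinite (μ.trim (ℱ.le s)) := inferInstance
  have hYnm0 : ∀ n (r : ℝ), r ∈ Set.Icc (0:ℝ) T → Measurable (Yn n r) :=
    fun n r hr => (((hYn n).1.1.1 r hr).measurable).mono (ℱ.le r) le_rfl
  have hint : ∀ n (r : ℝ), r ∈ Set.Icc (0:ℝ) T → Integrable (Yn n r) μ :=
    fun n r hr => (hYn n).1.2.1 r hr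
  have hnn : ∀ᵐ ω ∂μ, ∀ n, ∀ r ∈ Set.Icc (0:ℝ) T, 0 ≤ Yn n r ω :=
    ae_all_iff.2 fun n => (hYn n).1.1.2.1
  set G : ℕ → Ω → ℝ≥0∞ :=
    fun m ω => ⨅ (n : ℕ) (_ : m ≤ n), min (ENNReal.ofReal (Yn n u ω)) (M:ℝ≥0∞) with hGdef
  have hGmeas : ∀ m, Measurable (G m) := fun m =>
    Measurable.iInf fun n => Measurable.iInf fun _ =>
      (ENNReal.measurable_ofReal.comp (hYnm0 n u hu)).min measurable_const
  have hGleM : ∀ m ω, G m ω ≤ (M:ℝ≥0∞) := fun m ω =>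
    (iInf₂_le m le_rfl).trans (min_le_right _ _)
  have hGne : ∀ m ω, G m ω ≠ ⊤ :=
    fun m ω => ((hGleM m ω).trans_lt (ENNReal.natCast_lt_top M)).ne
  set g : ℕ → Ω → ℝ := fun m ω => (G m ω).toReal with hgdef
  have hgmeas : ∀ m, Measurable (g m) := fun m => (hGmeas m).ennreal_toReal
  have hg0 : ∀ m ω, 0 ≤ g m ω := fun m ω => ENNReal.toReal_nonneg
  have hgM : ∀ m ω, g m ω ≤ (M:ℝ) := fun m ω => by
    have := ENNReal.toReal_mono (ENNReal.natCast_ne_top M) (hGleM m ω)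
    simpa using this
  have hgint : ∀ m, Integrable (g m) μ :=
    fun m => (integrable_const (M:ℝ)).mono' (hgmeas m).aestronglyMeasurable
      (Filter.Eventually.of_forall fun ω => by
        rw [Real.norm_eq_abs, abs_of_nonneg (hg0 m ω)]; exact hgM m ω)
  have hcond : ∀ m n, m ≤ n → (μ[g m | ℱ s]) ≤ᵐ[μ] fun ω => min (Yn n s ω) (M:ℝ) := by
    intro m n hmn
    have h1 : g m ≤ᵐ[μ] Yn n u := by
      filter_upwards [hnn] with ω hω
      have hle : G m ω ≤ ENNReal.ofReal (Yn n u ω) :=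
        (iInf₂_le n hmn).trans (min_le_left _ _)
      calc g m ω ≤ (ENNReal.ofReal (Yn n u ω)).toReal :=
            ENNReal.toReal_mono ENNReal.ofReal_ne_top hle
        _ = Yn n u ω := ENNReal.toReal_ofReal (hω n u hu)
    have h2 : μ[g m | ℱ s] ≤ᵐ[μ] μ[Yn n u | ℱ s] :=
      condExp_mono (hgint m) (hint n u hu) h1
    have h3 : μ[Yn n u | ℱ s] ≤ᵐ[μ] Yn n s := (hYn n).1.2.2 s u hs hu hsu
    have h4 : μ[g m | ℱ s] ≤ᵐ[μ] fun _ => (M:ℝ) := by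
      have h5 : μ[g m | ℱ s] ≤ᵐ[μ] μ[(fun _ => (M:ℝ)) | ℱ s] :=
        condExp_mono (hgint m) (integrable_const _) (Filter.Eventually.of_forall (hgM m))
      have hc : μ[(fun _ => (M:ℝ)) | ℱ s] = fun _ => (M:ℝ) := condExp_const (ℱ.le s) _
      rwa [hc] at h5
    filter_upwards [h2, h3, h4] with ω ha hb hc
    exact le_min (ha.trans hb) hc
  have hofRealMono : Monotone ENNReal.ofReal := fun _ _ h => ENNReal.ofReal_le_ofReal h
  have hcondE : ∀ m, (fun ω => ENNReal.ofReal ((μ[g m | ℱ s]) ω)) ≤ᵐ[μ]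
      fun ω => min (Zl Yn s ω) (M:ℝ≥0∞) := by
    intro m
    have hall : ∀ᵐ ω ∂μ, ∀ n, m ≤ n → (μ[g m | ℱ s]) ω ≤ min (Yn n s ω) (M:ℝ) := by
      rw [ae_all_iff]
      intro n
      rcases le_or_gt m n with h | h
      · filter_upwards [hcond m n h] with ω hω _; exact hω
      · filter_upwards with ω hmn; exact absurd hmn (by omega)
    filter_upwards [hall] with ω hω
    have hstep : ∀ n, m ≤ n → ENNReal.ofReal ((μ[g m | ℱ s]) ω)
        ≤ min (ENNReal.ofReal (Yn n s ω)) (M:ℝ≥0∞) := by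
      intro n hn
      calc ENNReal.ofReal ((μ[g m | ℱ s]) ω)
          ≤ ENNReal.ofReal (min (Yn n s ω) (M:ℝ)) := ENNReal.ofReal_le_ofReal (hω n hn)
        _ = min (ENNReal.ofReal (Yn n s ω)) (ENNReal.ofReal (M:ℝ)) := hofRealMono.map_min
        _ = min (ENNReal.ofReal (Yn n s ω)) (M:ℝ≥0∞) := by rw [ENNReal.ofReal_natCast]
    have h5 : ENNReal.ofReal ((μ[g m | ℱ s]) ω)
        ≤ ⨅ (n : ℕ) (_ : m ≤ n), min (ENNReal.ofReal (Yn n s ω)) (M:ℝ≥0∞) :=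
      le_iInf₂ hstep
    refine h5.trans ?_
    calc (⨅ (n : ℕ) (_ : m ≤ n), min (ENNReal.ofReal (Yn n s ω)) (M:ℝ≥0∞))
        ≤ Filter.liminf (fun n => min (ENNReal.ofReal (Yn n s ω)) (M:ℝ≥0∞)) Filter.atTop := by
          rw [Filter.liminf_eq_iSup_iInf_of_nat]
          exact le_iSup
            (fun m => ⨅ (n : ℕ) (_ : m ≤ n), min (ENNReal.ofReal (Yn n s ω)) (M:ℝ≥0∞)) m
      _ = min (Zl Yn s ω) (M:ℝ≥0∞) := liminf_min_const _ _
  have hmain : ∀ m, ∫⁻ ω in A, G m ω ∂μ ≤ ∫⁻ ω in A, min (Zl Yn s ω) (M:ℝ≥0∞) ∂μ := by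
    intro m
    have e1 : ∫⁻ ω in A, G m ω ∂μ = ∫⁻ ω in A, ENNReal.ofReal (g m ω) ∂μ :=
      lintegral_congr fun ω => (ENNReal.ofReal_toReal (hGne m ω)).symm
    have e2 : ∫⁻ ω in A, ENNReal.ofReal (g m ω) ∂μ = ENNReal.ofReal (∫ ω in A, g m ω ∂μ) :=
      (ofReal_integral_eq_lintegral_ofReal (hgint m).integrableOn
        (ae_restrict_of_ae (Filter.Eventually.of_forall (hg0 m)))).symm
    have e3 : ∫ ω in A, g m ω ∂μ = ∫ ω in A, (μ[g m | ℱ s]) ω ∂μ :=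
      (setIntegral_condExp (ℱ.le s) (hgint m) hA).symm
    have e4 : ENNReal.ofReal (∫ ω in A, (μ[g m | ℱ s]) ω ∂μ)
        = ∫⁻ ω in A, ENNReal.ofReal ((μ[g m | ℱ s]) ω) ∂μ :=
      ofReal_integral_eq_lintegral_ofReal integrable_condExp.integrableOn
        (ae_restrict_of_ae (condExp_nonneg (Filter.Eventually.of_forall (hg0 m))))
    have e5 : ∫⁻ ω in A, ENNReal.ofReal ((μ[g m | ℱ s]) ω) ∂μ
        ≤ ∫⁻ ω in A, min (Zl Yn s ω) (M:ℝ≥0∞) ∂μ :=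
      lintegral_mono_ae (ae_restrict_of_ae (hcondE m))
    rw [e1, e2, e3, e4]; exact e5
  have hsup : ∀ ω, (⨆ m, G m ω) = min (Zl Yn u ω) (M:ℝ≥0∞) := by
    intro ω
    have hz : Zl Yn u ω ⊓ (M:ℝ≥0∞) = Filter.liminf
        (fun n => min (ENNReal.ofReal (Yn n u ω)) (M:ℝ≥0∞)) Filter.atTop :=
      (liminf_min_const _ _).symm
    rw [hz, Filter.liminf_eq_iSup_iInf_of_nat]
  have hMono : Monotone G := fun a b hab ω =>
    le_iInf₂ fun n hn => iInf₂_le n (hab.trans hn)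
  calc ∫⁻ ω in A, min (Zl Yn u ω) (M:ℝ≥0∞) ∂μ
      = ∫⁻ ω in A, ⨆ m, G m ω ∂μ := lintegral_congr fun ω => (hsup ω).symm
    _ = ⨆ m, ∫⁻ ω in A, G m ω ∂μ := lintegral_iSup (fun m => hGmeas m) hMono
    _ ≤ ∫⁻ ω in A, min (Zl Yn s ω) (M:ℝ≥0∞) ∂μ := iSup_le hmain
/-- If `Yⁿ` is a sequence in `S₁` Fatou converging to `Y ∈ S₁`, then outside a
countable set `K ⊆ [0,T)` one has `Y_t = liminf_n Yⁿ_t` a.s. -/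
theorem fatou_liminf_off_countable {m0 : MeasurableSpace Ω} (μ : Measure Ω)
    [IsProbabilityMeasure μ] (T : ℝ) (hT : 0 < T) (ℱ : Filtration ℝ m0)
    (hrc : ∀ t : ℝ, (ℱ t : MeasurableSpace Ω) = ⨅ (s : ℝ) (_ : t < s), ℱ s)
    (hcomp : ∀ A : Set Ω, μ A = 0 → MeasurableSet[ℱ 0] A)
    (htriv : ∀ A : Set Ω, MeasurableSet[ℱ 0] A → μ A = 0 ∨ μ A = 1)
    (Yn : ℕ → ℝ → Ω → ℝ) (Y : ℝ → Ω → ℝ)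
    (hYn : ∀ n, S1mem μ T ℱ (Yn n)) (hY : S1mem μ T ℱ Y)
    (hconv : FatouConv μ T Yn Y) :
    ∃ K : Set ℝ, K.Countable ∧ K ⊆ Set.Ico (0 : ℝ) T ∧
      ∀ t ∈ Set.Icc (0 : ℝ) T, t ∉ K → ∀ᵐ ω ∂μ,
        ENNReal.ofReal (Y t ω) =
          Filter.liminf (fun n => ENNReal.ofReal (Yn n t ω)) Filter.atTop := by
  classical
  obtain ⟨T', hT'c, hT'sub, hT'dense, hae⟩ := hconv
  -- measurability of the liminf process
  have hZmF : ∀ r ∈ Set.Icc (0:ℝ) T, Measurable[ℱ r] (Zl Yn r) := by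
    intro r hr
    exact Measurable.liminf fun n =>
      ENNReal.measurable_ofReal.comp ((hYn n).1.1.1 r hr).measurable
  have hZm : ∀ r ∈ Set.Icc (0:ℝ) T, Measurable (Zl Yn r) :=
    fun r hr => (hZmF r hr).mono (ℱ.le r) le_rfl
  -- Step A : a.e. convergence of the liminf process from the right
  have hTend : ∀ᵐ ω ∂μ, ∀ t ∈ Set.Ico (0:ℝ) T,
      Filter.Tendsto (fun r => Zl Yn r ω) (nhdsWithin t (Set.Ioi t ∩ T'))
        (nhds (ENNReal.ofReal (Y t ω))) := by
    filter_upwards [hae] with ω hω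
    intro t ht
    obtain ⟨sq, hsq, hsqt⟩ := exists_approx_seq hT'dense ht
    haveI hNB : (nhdsWithin t (Set.Ioi t ∩ T')).NeBot := Filter.neBot_of_le hsqt
    obtain ⟨hli, hls⟩ := hω.1 t ht
    have hW : Filter.liminf (fun r => Zl Yn r ω) (nhdsWithin t (Set.Ioi t ∩ T'))
        = ENNReal.ofReal (Y t ω) := hli.symm
    have h1 : Filter.limsup (fun r => Zl Yn r ω) (nhdsWithin t (Set.Ioi t ∩ T'))
        ≤ ENNReal.ofReal (Y t ω) := by
      calc Filter.limsup (fun r => Zl Yn r ω) (nhdsWithin t (Set.Ioi t ∩ T'))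
          ≤ Filter.limsup (fun r => Filter.limsup
              (fun n => ENNReal.ofReal (Yn n r ω)) Filter.atTop)
              (nhdsWithin t (Set.Ioi t ∩ T')) :=
            Filter.limsup_le_limsup (Filter.Eventually.of_forall
              fun r => Filter.liminf_le_limsup)
        _ = ENNReal.ofReal (Y t ω) := hls.symm
    have heq : Filter.limsup (fun r => Zl Yn r ω) (nhdsWithin t (Set.Ioi t ∩ T'))
        = ENNReal.ofReal (Y t ω) :=
      le_antisymm h1 (hW ▸ Filter.liminf_le_limsup)
    exact tendsto_of_liminf_eq_limsup hW heq
  -- Step C : pointwise a.e. inequality  Y_t ≤ Z_t  for every t ∈ [0,T)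
  have hYleZ : ∀ t ∈ Set.Ico (0:ℝ) T, ∀ᵐ ω ∂μ,
      ENNReal.ofReal (Y t ω) ≤ Zl Yn t ω := by
    intro t ht
    have htIcc : t ∈ Set.Icc (0:ℝ) T := ⟨ht.1, ht.2.le⟩
    obtain ⟨sq, hsq, hsqt⟩ := exists_approx_seq hT'dense ht
    have hsqIcc : ∀ k, sq k ∈ Set.Icc (0:ℝ) T := fun k => hT'sub (hsq k).1
    have hZsq : ∀ᵐ ω ∂μ, Filter.Tendsto (fun k => Zl Yn (sq k) ω) Filter.atTop
        (nhds (ENNReal.ofReal (Y t ω))) := by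
      filter_upwards [hTend] with ω hω
      exact (hω t ht).comp hsqt
    have hAineq : ∀ M : ℕ, ∀ A : Set Ω, MeasurableSet[ℱ t] A →
        ∫⁻ ω in A, min (ENNReal.ofReal (Y t ω)) (M:ℝ≥0∞) ∂μ
          ≤ ∫⁻ ω in A, min (Zl Yn t ω) (M:ℝ≥0∞) ∂μ := by
      intro M A hA
      have hk : ∀ k, ∫⁻ ω in A, min (Zl Yn (sq k) ω) (M:ℝ≥0∞) ∂μ
          ≤ ∫⁻ ω in A, min (Zl Yn t ω) (M:ℝ≥0∞) ∂μ :=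
        fun k => superMG_truncated μ ℱ hYn M htIcc (hsqIcc k) (hsq k).2.1.le hA
      have htend : Filter.Tendsto (fun k => ∫⁻ ω in A, min (Zl Yn (sq k) ω) (M:ℝ≥0∞) ∂μ)
          Filter.atTop (nhds (∫⁻ ω in A, min (ENNReal.ofReal (Y t ω)) (M:ℝ≥0∞) ∂μ)) := by
        refine tendsto_lintegral_of_dominated_convergence (fun _ => (M:ℝ≥0∞))
          (fun k => ((hZm (sq k) (hsqIcc k)).min measurable_const)) 
          (fun k => Filter.Eventually.of_forall fun ω => min_le_right _ _) ?_ ?_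
        · simp only [lintegral_const]
          exact ENNReal.mul_ne_top (ENNReal.natCast_ne_top M)
            (measure_ne_top (μ.restrict A) Set.univ)
        · exact ae_restrict_of_ae (hZsq.mono fun ω hω => hω.min tendsto_const_nhds)
      exact le_of_tendsto htend (Filter.Eventually.of_forall hk)
    have hptM : ∀ M : ℕ, ∀ᵐ ω ∂μ,
        min (ENNReal.ofReal (Y t ω)) (M:ℝ≥0∞) ≤ min (Zl Yn t ω) (M:ℝ≥0∞) := by
      intro M
      haveI : SigmaFinite (μ.trim (ℱ.le t)) := inferInstance
      have hfm : Measurable[ℱ t] fun ω => min (ENNReal.ofReal (Y t ω)) (M:ℝ≥0∞) :=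
        (ENNReal.measurable_ofReal.comp (hY.1.1.1 t htIcc).measurable).min measurable_const
      have hgm : Measurable[ℱ t] fun ω => min (Zl Yn t ω) (M:ℝ≥0∞) :=
        (hZmF t htIcc).min measurable_const
      refine ae_le_of_ae_le_trim (hm := ℱ.le t) ?_
      refine ae_le_of_forall_setLIntegral_le_of_sigmaFinite hfm ?_
      intro A hA _
      rw [restrict_trim (ℱ.le t) μ hA, lintegral_trim _ hfm, lintegral_trim _ hgm]
      exact hAineq M A hA
    filter_upwards [ae_all_iff.2 hptM] with ω hω
    have hM : ENNReal.ofReal (Y t ω) ≤ ((⌈Y t ω⌉₊ : ℕ) : ℝ≥0∞) := by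
      rw [← ENNReal.ofReal_natCast]
      exact ENNReal.ofReal_le_ofReal (Nat.le_ceil _)
    have h := hω ⌈Y t ω⌉₊
    rw [min_eq_left hM] at h
    exact h.trans (min_le_left _ _)
  -- Step D : the countable exceptional set
  have hclamp : ∀ r : ℝ, max 0 (min r T) ∈ Set.Icc (0:ℝ) T := fun r =>
    ⟨le_max_left _ _, max_le hT.le (min_le_right _ _)⟩
  set ψ : ℕ → ℝ → ℝ≥0∞ :=
    fun M r => ∫⁻ ω, min (Zl Yn (max 0 (min r T)) ω) (M:ℝ≥0∞) ∂μ with hψ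
  have hψanti : ∀ M, Antitone (ψ M) := by
    intro M r r' hrr'
    have hmono : max 0 (min r T) ≤ max 0 (min r' T) :=
      max_le_max le_rfl (min_le_min hrr' le_rfl)
    have h := superMG_truncated μ ℱ hYn M (hclamp r) (hclamp r') hmono
      (MeasurableSet.univ (α := Ω))
    simpa [hψ, Measure.restrict_univ] using h
  refine ⟨(⋃ M : ℕ, {r | ¬ContinuousAt (ψ M) r}) ∩ Set.Ico 0 T, ?_,
    Set.inter_subset_right, ?_⟩
  · exact (Set.countable_iUnion fun M =>
      (hψanti M).countable_not_continuousAt).mono Set.inter_subset_left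
  intro t ht htK
  rcases eq_or_lt_of_le ht.2 with hTt | htlt
  · -- t = T : use the terminal convergence
    subst hTt
    filter_upwards [hae] with ω hω
    have h : Filter.Tendsto (fun n => ENNReal.ofReal (Yn n t ω)) Filter.atTop
        (nhds (ENNReal.ofReal (Y t ω))) :=
      (ENNReal.continuous_ofReal.tendsto (Y t ω)).comp hω.2
    exact h.liminf_eq.symm
  · have htIco : t ∈ Set.Ico (0:ℝ) T := ⟨ht.1, htlt⟩
    have htIcc : t ∈ Set.Icc (0:ℝ) T := ht
    have hcont : ∀ M : ℕ, ContinuousAt (ψ M) t := by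
      intro M
      by_contra hc
      exact htK ⟨Set.mem_iUnion.2 ⟨M, hc⟩, htIco⟩
    obtain ⟨sq, hsq, hsqt⟩ := exists_approx_seq hT'dense htIco
    have hsqIcc : ∀ k, sq k ∈ Set.Icc (0:ℝ) T := fun k => hT'sub (hsq k).1
    have hZsq : ∀ᵐ ω ∂μ, Filter.Tendsto (fun k => Zl Yn (sq k) ω) Filter.atTop
        (nhds (ENNReal.ofReal (Y t ω))) := by
      filter_upwards [hTend] with ω hω
      exact (hω t htIco).comp hsqt
    have hEq : ∀ M : ℕ, ∫⁻ ω, min (ENNReal.ofReal (Y t ω)) (M:ℝ≥0∞) ∂μ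
        = ∫⁻ ω, min (Zl Yn t ω) (M:ℝ≥0∞) ∂μ := by
      intro M
      have hclampk : ∀ k, max 0 (min (sq k) T) = sq k := fun k => by
        rw [min_eq_left (hsq k).2.2, max_eq_right (ht.1.trans (hsq k).2.1.le)]
      have hclampt : max 0 (min t T) = t := by
        rw [min_eq_left ht.2, max_eq_right ht.1]
      have e1 : Filter.Tendsto (fun k => ψ M (sq k)) Filter.atTop (nhds (ψ M t)) :=
        (hcont M).tendsto.comp (hsqt.mono_right nhdsWithin_le_nhds)
      have e1' : Filter.Tendsto (fun k => ∫⁻ ω, min (Zl Yn (sq k) ω) (M:ℝ≥0∞) ∂μ)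
          Filter.atTop (nhds (∫⁻ ω, min (Zl Yn t ω) (M:ℝ≥0∞) ∂μ)) := by
        simpa [hψ, hclampk, hclampt] using e1
      have e2 : Filter.Tendsto (fun k => ∫⁻ ω, min (Zl Yn (sq k) ω) (M:ℝ≥0∞) ∂μ)
          Filter.atTop (nhds (∫⁻ ω, min (ENNReal.ofReal (Y t ω)) (M:ℝ≥0∞) ∂μ)) := by
        refine tendsto_lintegral_of_dominated_convergence (fun _ => (M:ℝ≥0∞))
          (fun k => ((hZm (sq k) (hsqIcc k)).min measurable_const))
          (fun k => Filter.Eventually.of_forall fun ω => min_le_right _ _) ?_ ?_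
        · simp only [lintegral_const]
          exact ENNReal.mul_ne_top (ENNReal.natCast_ne_top M) (measure_ne_top μ Set.univ)
        · exact hZsq.mono fun ω hω => hω.min tendsto_const_nhds
      exact tendsto_nhds_unique e2 e1'
    have hle := hYleZ t htIco
    have hgeM : ∀ M : ℕ, ∀ᵐ ω ∂μ,
        min (Zl Yn t ω) (M:ℝ≥0∞) ≤ min (ENNReal.ofReal (Y t ω)) (M:ℝ≥0∞) := by
      intro M
      have hfmeas : Measurable fun ω => min (ENNReal.ofReal (Y t ω)) (M:ℝ≥0∞) :=
        ((ENNReal.measurable_ofReal.comp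
          (hY.1.1.1 t htIcc).measurable).mono (ℱ.le t) le_rfl).min measurable_const
      have hgmeas : Measurable fun ω => min (Zl Yn t ω) (M:ℝ≥0∞) :=
        (hZm t htIcc).min measurable_const
      have hfin : ∫⁻ ω, min (ENNReal.ofReal (Y t ω)) (M:ℝ≥0∞) ∂μ ≠ ⊤ := by
        refine ((lintegral_mono fun ω => min_le_right _ _).trans_lt ?_).ne
        simp only [lintegral_const]
        exact ENNReal.mul_lt_top (ENNReal.natCast_lt_top M) (measure_lt_top μ Set.univ)
      have hlem : (fun ω => min (ENNReal.ofReal (Y t ω)) (M:ℝ≥0∞)) ≤ᵐ[μ]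
          fun ω => min (Zl Yn t ω) (M:ℝ≥0∞) :=
        hle.mono fun ω h => min_le_min h le_rfl
      have hsub0 : ∫⁻ ω, (min (Zl Yn t ω) (M:ℝ≥0∞)
          - min (ENNReal.ofReal (Y t ω)) (M:ℝ≥0∞)) ∂μ = 0 := by
        rw [lintegral_sub hfmeas hfin hlem, ← hEq M, tsub_self]
      have h0 := (lintegral_eq_zero_iff (hgmeas.sub hfmeas)).1 hsub0
      filter_upwards [h0] with ω hω
      exact tsub_eq_zero_iff_le.1 hω
    filter_upwards [ae_all_iff.2 hgeM, hle] with ω hω hωle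
    refine le_antisymm hωle ?_
    by_contra hlt
    push_neg at hlt
    have hYM : ENNReal.ofReal (Y t ω) < ((⌈Y t ω⌉₊ + 1 : ℕ) : ℝ≥0∞) := by
      have h1 : ENNReal.ofReal (Y t ω) ≤ ((⌈Y t ω⌉₊ : ℕ) : ℝ≥0∞) := by
        rw [← ENNReal.ofReal_natCast]
        exact ENNReal.ofReal_le_ofReal (Nat.le_ceil _)
      exact h1.trans_lt (by exact_mod_cast Nat.lt_succ_self ⌈Y t ω⌉₊)
    have h := hω (⌈Y t ω⌉₊ + 1)
    rw [min_eq_left hYM.le] at h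
    exact absurd h (not_le.2 (lt_min hlt hYM))
end
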